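/- arXiv:2312.01034 — 4 statements merged into one kernel-verified Lean document; each statement's English description precedes it below -/
import Mathlib

section
/- Fix p ∈ [1,∞] and let D ∈ 𝒟^p. If the mean-deviation model U(X) = V(E[X], D(X)) satisfies monotonicity [M] (i.e., X ≤ Y a.s. implies U(X) ≤ U(Y)), then U(X) < ∞ for every X ∈ L^p, and the quantity K := sup over nonconstant X ∈ L^p of D(X)/(ess-sup X − E[X]) satisfies 0 < K < ∞; equivalently, there exists λ > 0 (namely λ = 1/K) such that λD is range normalized. -/
open MeasureTheory Filter Set
open scoped ENNReal

noncomputable section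

variable {Ω : Type*} [MeasurableSpace Ω]

/-- The measure `μ` is nonatomic. -/
def Nonatomic (μ : Measure Ω) : Prop :=
  ∀ A : Set Ω, MeasurableSet A → 0 < μ A →
    ∃ B, B ⊆ A ∧ MeasurableSet B ∧ 0 < μ B ∧ μ B < μ A

/-- `X` is a.s. equal to a constant. -/
def AEConst (μ : Measure Ω) (X : Ω → ℝ) : Prop :=
  ∃ c : ℝ, X =ᵐ[μ] fun _ => c

/-- `D` is a deviation measure on `L^p`: it is `[0,∞)`-valued and satisfies
(D1) translation invariance, (D2) strict positivity on nonconstant random variables,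
(D3) positive homogeneity and (D4) subadditivity. -/
def IsDeviation (μ : Measure Ω) (p : ℝ≥0∞) (D : (Ω → ℝ) → ℝ) : Prop :=
  (∀ X, MemLp X p μ → 0 ≤ D X) ∧
  (∀ X, MemLp X p μ → ∀ c : ℝ, D (fun ω => X ω + c) = D X) ∧
  (∀ X, MemLp X p μ → ¬ AEConst μ X → 0 < D X) ∧
  (∀ X, MemLp X p μ → ∀ l : ℝ, 0 ≤ l → D (fun ω => l * X ω) = l * D X) ∧
  (∀ X Y, MemLp X p μ → MemLp Y p μ → D (fun ω => X ω + Y ω) ≤ D X + D Y)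

/-- (D5) law invariance. -/
def LawInvariant (μ : Measure Ω) (p : ℝ≥0∞) (D : (Ω → ℝ) → ℝ) : Prop :=
  ∀ X Y, MemLp X p μ → MemLp Y p μ → μ.map X = μ.map Y → D X = D Y

/-- `D` is range normalized: the supremum over nonconstant `X ∈ L^p` of
`D X / (ess-sup X - E[X])` equals `1` (the ratio being interpreted as `0` when
`ess-sup X = ∞`, so that only essentially bounded `X` matter):
`1` is an upper bound of the ratios, and no `k < 1` is an upper bound. -/
def RangeNormalized (μ : Measure Ω) (p : ℝ≥0∞) (D : (Ω → ℝ) → ℝ) : Prop :=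
  (∀ X, MemLp X p μ → (∃ c : ℝ, ∀ᵐ ω ∂μ, X ω ≤ c) →
    D X ≤ essSup X μ - ∫ ω, X ω ∂μ) ∧
  (∀ k : ℝ, k < 1 → ∃ X, MemLp X p μ ∧ (∃ c : ℝ, ∀ᵐ ω ∂μ, X ω ≤ c) ∧ ¬ AEConst μ X ∧
    k * (essSup X μ - ∫ ω, X ω ∂μ) < D X)

/-- Monotonicity [M] for a real-valued functional on `L^p`. -/
def MonotoneRM (μ : Measure Ω) (p : ℝ≥0∞) (ρ : (Ω → ℝ) → ℝ) : Prop :=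
  ∀ X Y, MemLp X p μ → MemLp Y p μ → (∀ᵐ ω ∂μ, X ω ≤ Y ω) → ρ X ≤ ρ Y

/-- Cash additivity [CA]. -/
def CashAdditive (μ : Measure Ω) (p : ℝ≥0∞) (ρ : (Ω → ℝ) → ℝ) : Prop :=
  ∀ X, MemLp X p μ → ∀ c : ℝ, ρ (fun ω => X ω + c) = ρ X + c

/-- Positive homogeneity [PH]. -/
def PosHom (μ : Measure Ω) (p : ℝ≥0∞) (ρ : (Ω → ℝ) → ℝ) : Prop :=
  ∀ X, MemLp X p μ → ∀ l : ℝ, 0 < l → ρ (fun ω => l * X ω) = l * ρ X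

/-- Subadditivity [SA]. -/
def SubadditiveRM (μ : Measure Ω) (p : ℝ≥0∞) (ρ : (Ω → ℝ) → ℝ) : Prop :=
  ∀ X Y, MemLp X p μ → MemLp Y p μ → ρ (fun ω => X ω + Y ω) ≤ ρ X + ρ Y

/-- Convexity [Cx]. -/
def ConvexRMProp (μ : Measure Ω) (p : ℝ≥0∞) (ρ : (Ω → ℝ) → ℝ) : Prop :=
  ∀ X Y, MemLp X p μ → MemLp Y p μ → ∀ l : ℝ, 0 ≤ l → l ≤ 1 →
    ρ (fun ω => l * X ω + (1 - l) * Y ω) ≤ l * ρ X + (1 - l) * ρ Y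

/-- SSD-consistency [SC]: `ρ X ≤ ρ Y` whenever `E[u(X)] ≤ E[u(Y)]` for every
increasing convex `u` (for which both expectations exist). -/
def SSDConsistent (μ : Measure Ω) (p : ℝ≥0∞) (ρ : (Ω → ℝ) → ℝ) : Prop :=
  ∀ X Y, MemLp X p μ → MemLp Y p μ →
    (∀ u : ℝ → ℝ, Monotone u → ConvexOn ℝ univ u →
      Integrable (fun ω => u (X ω)) μ → Integrable (fun ω => u (Y ω)) μ →
      ∫ ω, u (X ω) ∂μ ≤ ∫ ω, u (Y ω) ∂μ) →
    ρ X ≤ ρ Y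

/-- Monetary risk measure: [M] and [CA]. -/
def Monetary (μ : Measure Ω) (p : ℝ≥0∞) (ρ : (Ω → ℝ) → ℝ) : Prop :=
  MonotoneRM μ p ρ ∧ CashAdditive μ p ρ

/-- Coherent risk measure: [M], [CA], [PH], [SA]. -/
def Coherent (μ : Measure Ω) (p : ℝ≥0∞) (ρ : (Ω → ℝ) → ℝ) : Prop :=
  MonotoneRM μ p ρ ∧ CashAdditive μ p ρ ∧ PosHom μ p ρ ∧ SubadditiveRM μ p ρ

/-- Convex risk measure: monetary and [Cx]. -/
def ConvexRiskMeasure (μ : Measure Ω) (p : ℝ≥0∞) (ρ : (Ω → ℝ) → ℝ) : Prop :=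
  Monetary μ p ρ ∧ ConvexRMProp μ p ρ

/-- Consistent risk measure: monetary and [SC]. -/
def ConsistentRiskMeasure (μ : Measure Ω) (p : ℝ≥0∞) (ρ : (Ω → ℝ) → ℝ) : Prop :=
  Monetary μ p ρ ∧ SSDConsistent μ p ρ

/-- Star-shaped risk measure: monetary, normalized at `0` and star-shaped. -/
def StarShapedRM (μ : Measure Ω) (p : ℝ≥0∞) (ρ : (Ω → ℝ) → ℝ) : Prop :=
  Monetary μ p ρ ∧ ρ (fun _ => 0) = 0 ∧
    ∀ X, MemLp X p μ → ∀ l : ℝ, 0 ≤ l → l ≤ 1 → ρ (fun ω => l * X ω) ≤ l * ρ X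

/-- `g ∈ 𝒢`: a risk-weighting function, i.e. a nonconstant, increasing,
1-Lipschitz function on `[0,∞)` with `g 0 = 0`. -/
def IsRiskWeight (g : ℝ → ℝ) : Prop :=
  (∃ x y : ℝ, 0 ≤ x ∧ 0 ≤ y ∧ g x ≠ g y) ∧ MonotoneOn g (Ici 0) ∧
  (∀ x y : ℝ, 0 ≤ x → 0 ≤ y → |g x - g y| ≤ |x - y|) ∧ g 0 = 0

/-- The monotonic mean-deviation measure `MD^D_g = g ∘ D + E`. -/
def MD (μ : Measure Ω) (D : (Ω → ℝ) → ℝ) (g : ℝ → ℝ) (X : Ω → ℝ) : ℝ :=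
  g (D X) + ∫ ω, X ω ∂μ

/-- `V : ℝ × [0,∞) → (−∞,∞]` defining a mean-deviation model:
increasing in each argument, `V m 0 = m`, never `−∞`, and depending
nontrivially on the deviation argument. -/
def IsMDModelV (V : ℝ → ℝ → EReal) : Prop :=
  (∀ d : ℝ, 0 ≤ d → Monotone (fun m => V m d)) ∧
  (∀ m : ℝ, MonotoneOn (fun d => V m d) (Ici 0)) ∧
  (∀ m : ℝ, V m 0 = (m : EReal)) ∧
  (∀ m d : ℝ, 0 ≤ d → V m d ≠ ⊥) ∧
  (∃ m d₁ d₂ : ℝ, 0 ≤ d₁ ∧ 0 ≤ d₂ ∧ V m d₁ ≠ V m d₂)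

/-- Monotonicity [M] for an `(−∞,∞]`-valued functional. -/
def MonotoneE (μ : Measure Ω) (p : ℝ≥0∞) (U : (Ω → ℝ) → EReal) : Prop :=
  ∀ X Y, MemLp X p μ → MemLp Y p μ → (∀ᵐ ω ∂μ, X ω ≤ Y ω) → U X ≤ U Y

/-- Cash additivity [CA] for an `(−∞,∞]`-valued functional. -/
def CashAdditiveE (μ : Measure Ω) (p : ℝ≥0∞) (U : (Ω → ℝ) → EReal) : Prop :=
  ∀ X, MemLp X p μ → ∀ c : ℝ, U (fun ω => X ω + c) = U X + (c : EReal)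

/-- SSD-consistency [SC] for an `(−∞,∞]`-valued functional. -/
def SSDConsistentE (μ : Measure Ω) (p : ℝ≥0∞) (U : (Ω → ℝ) → EReal) : Prop :=
  ∀ X Y, MemLp X p μ → MemLp Y p μ →
    (∀ u : ℝ → ℝ, Monotone u → ConvexOn ℝ univ u →
      Integrable (fun ω => u (X ω)) μ → Integrable (fun ω => u (Y ω)) μ →
      ∫ ω, u (X ω) ∂μ ≤ ∫ ω, u (Y ω) ∂μ) →
    U X ≤ U Y

/-- Left derivative of a real function. -/
def leftDeriv (f : ℝ → ℝ) (x : ℝ) : ℝ := derivWithin f (Iio x) x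

/-- The conjugate function `g*(y) = sup_{x ≥ 0} (x y − g x)`, with values in `(−∞,∞]`. -/
def conjFun (g : ℝ → ℝ) (y : ℝ) : EReal :=
  ⨆ x : Ici (0:ℝ), ((x.1 * y - g x.1 : ℝ) : EReal)

/-- Value-at-Risk: the left `α`-quantile of `X`. -/
def VaR (μ : Measure Ω) (X : Ω → ℝ) (α : ℝ) : ℝ :=
  sInf {x : ℝ | ENNReal.ofReal α ≤ μ {ω | X ω ≤ x}}

/-- The signed Choquet integral `D_h(X) = ∫₀¹ VaR_α(X) h'(1−α) dα`. -/
def Dh (μ : Measure Ω) (h : ℝ → ℝ) (X : Ω → ℝ) : ℝ :=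
  ∫ α in (0:ℝ)..1, VaR μ X α * leftDeriv h (1 - α)

/-- `Φ^p` (described via the conjugate exponent `q`): concave functions `h` on `[0,1]`
with `h 0 = h 1 = 0` and `‖h'‖_q < ∞`. -/
def PhiSet (q : ℝ≥0∞) : Set (ℝ → ℝ) :=
  {h | ConcaveOn ℝ (Icc 0 1) h ∧ h 0 = 0 ∧ h 1 = 0 ∧
    MemLp (leftDeriv h) q ((volume : Measure ℝ).restrict (Ioo 0 1))}

/-- The `L²[0,1]` norm of a function. -/
def Lnorm2 (f : ℝ → ℝ) : ℝ := Real.sqrt (∫ t in (0:ℝ)..1, (f t) ^ 2)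

/-- Left quantile function of a distribution (probability measure) on `ℝ`. -/
def qtl (ν : Measure ℝ) (u : ℝ) : ℝ := sInf {x : ℝ | ENNReal.ofReal u ≤ ν (Iic x)}

/-- Convex order `X ≤_cx Y`: `E[φ(X)] ≤ E[φ(Y)]` for every convex `φ` for which
both expectations exist. -/
def ConvexOrder (μ : Measure Ω) (X Y : Ω → ℝ) : Prop :=
  ∀ φ : ℝ → ℝ, ConvexOn ℝ univ φ → Integrable (fun ω => φ (X ω)) μ →
    Integrable (fun ω => φ (Y ω)) μ → ∫ ω, φ (X ω) ∂μ ≤ ∫ ω, φ (Y ω) ∂μ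

/-- `R` is a total preorder on `L^p`. -/
def TotalPreorderOn (μ : Measure Ω) (p : ℝ≥0∞) (R : (Ω → ℝ) → (Ω → ℝ) → Prop) : Prop :=
  (∀ X, MemLp X p μ → R X X) ∧
  (∀ X Y Z, MemLp X p μ → MemLp Y p μ → MemLp Z p μ → R X Y → R Y Z → R X Z) ∧
  (∀ X Y, MemLp X p μ → MemLp Y p μ → R X Y ∨ R Y X)

/-- Axiom A1 (monotonicity): `X ≤ Y` a.s. implies `X ≽ Y`. -/
def AxiomA1 (μ : Measure Ω) (p : ℝ≥0∞) (R : (Ω → ℝ) → (Ω → ℝ) → Prop) : Prop :=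
  ∀ X Y, MemLp X p μ → MemLp Y p μ → (∀ᵐ ω ∂μ, X ω ≤ Y ω) → R X Y

/-- Axiom B1: for constants `c₁ ≤ c₂` one has `c₁ ≽ c₂`. -/
def AxiomB1 (R : (Ω → ℝ) → (Ω → ℝ) → Prop) : Prop :=
  ∀ c₁ c₂ : ℝ, c₁ ≤ c₂ → R (fun _ => c₁) (fun _ => c₂)

/-- Axiom A2 (translation invariance). -/
def AxiomA2 (μ : Measure Ω) (p : ℝ≥0∞) (R : (Ω → ℝ) → (Ω → ℝ) → Prop) : Prop :=
  ∀ X Y, MemLp X p μ → MemLp Y p μ → ∀ c : ℝ,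
    (R X Y ↔ R (fun ω => X ω + c) (fun ω => Y ω + c))

/-- Axiom A3 (weak positive homogeneity). -/
def AxiomA3 (μ : Measure Ω) (p : ℝ≥0∞) (R : (Ω → ℝ) → (Ω → ℝ) → Prop) : Prop :=
  ∀ X Y, MemLp X p μ → MemLp Y p μ → (∫ ω, X ω ∂μ) = (∫ ω, Y ω ∂μ) → R X Y →
    ∀ l : ℝ, 0 < l → R (fun ω => l * X ω) (fun ω => l * Y ω)

/-- Axiom A4 (risk aversion). -/
def AxiomA4 (μ : Measure Ω) (p : ℝ≥0∞) (R : (Ω → ℝ) → (Ω → ℝ) → Prop) : Prop :=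
  (∀ X Y, MemLp X p μ → MemLp Y p μ → ConvexOrder μ X Y → R X Y) ∧
  (∀ X, MemLp X p μ → ¬ AEConst μ X →
    R (fun _ => ∫ ω, X ω ∂μ) X ∧ ¬ R X (fun _ => ∫ ω, X ω ∂μ))

/-- Axiom A5 (solvability). -/
def AxiomA5 (μ : Measure Ω) (p : ℝ≥0∞) (R : (Ω → ℝ) → (Ω → ℝ) → Prop) : Prop :=
  ∀ X, MemLp X p μ → ∃ c : ℝ, R X (fun _ => c) ∧ R (fun _ => c) X

/-- Axiom A6 (weak convexity). -/
def AxiomA6 (μ : Measure Ω) (p : ℝ≥0∞) (R : (Ω → ℝ) → (Ω → ℝ) → Prop) : Prop :=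
  ∀ X Y, MemLp X p μ → MemLp Y p μ → (∫ ω, X ω ∂μ) = (∫ ω, Y ω ∂μ) →
    R X Y → R Y X →
    ∀ l : ℝ, 0 ≤ l → l ≤ 1 → R (fun ω => l * X ω + (1 - l) * Y ω) X

/-- Axiom A7 (continuity): the upper and lower sets of every `X` are closed in the
`L^p` norm (expressed via sequential closedness, equivalent in the metric space `L^p`). -/
def AxiomA7 (μ : Measure Ω) (p : ℝ≥0∞) (R : (Ω → ℝ) → (Ω → ℝ) → Prop) : Prop :=
  ∀ X, MemLp X p μ →
    (∀ (Y : ℕ → Ω → ℝ) (Z : Ω → ℝ), (∀ n, MemLp (Y n) p μ) → MemLp Z p μ →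
      Tendsto (fun n => eLpNorm (fun ω => Y n ω - Z ω) p μ) atTop (nhds 0) →
      (∀ n, R (Y n) X) → R Z X) ∧
    (∀ (Y : ℕ → Ω → ℝ) (Z : Ω → ℝ), (∀ n, MemLp (Y n) p μ) → MemLp Z p μ →
      Tendsto (fun n => eLpNorm (fun ω => Y n ω - Z ω) p μ) atTop (nhds 0) →
      (∀ n, R X (Y n)) → R X Z)

/-
Monotonicity compares `V (E Z) (D Z)` with the constant `b` whenever `Z ≤ b`, and `V b 0 = b`.
Any `(m, d)` with `d ≥ 0` is the mean–deviation pair of an affine image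
`Z = d / D X * (X - E X) + m` of a nonconstant `X ≤ c`, so `V m d ≤ m + d / D X * (c - E X)`.
With `X` the indicator of a set of intermediate measure this makes `V` finite; with `c = ess-sup X`
and a point where `V m d > m`, it bounds `D X` by a fixed multiple of `ess-sup X - E X`,
so the supremum `K` of the ratios is finite, and `1 / K` range-normalizes `D`.
-/

lemma exists_pos_mul_le_and_forall_lt_one {ι : Type*} (s : Set ι) (f g : ι → ℝ)
    (hg : ∀ i ∈ s, 0 < g i) (hbdd : ∃ C, ∀ i ∈ s, f i ≤ C * g i)
    (hpos : ∃ i ∈ s, 0 < f i) :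
    ∃ l : ℝ, 0 < l ∧ (∀ i ∈ s, l * f i ≤ g i) ∧ ∀ k < 1, ∃ i ∈ s, k * g i < l * f i := by
  set S := (fun i => f i / g i) '' s
  obtain ⟨C, hC⟩ := hbdd
  have hS : BddAbove S := by
    refine ⟨C, ?_⟩
    rintro _ ⟨i, hi, rfl⟩
    exact (div_le_iff₀ (hg i hi)).2 (hC i hi)
  have hle : ∀ i ∈ s, f i / g i ≤ sSup S := fun i hi => le_csSup hS ⟨i, hi, rfl⟩
  obtain ⟨i₀, hi₀, hfi₀⟩ := hpos
  have hK : 0 < sSup S := (div_pos hfi₀ (hg i₀ hi₀)).trans_le (hle i₀ hi₀)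
  refine ⟨(sSup S)⁻¹, inv_pos.2 hK, fun i hi => ?_, fun k hk => ?_⟩
  · rw [inv_mul_le_iff₀ hK, ← div_le_iff₀ (hg i hi)]
    exact hle i hi
  · obtain ⟨_, ⟨i, hi, rfl⟩, hki⟩ :=
      exists_lt_of_lt_csSup (⟨_, i₀, hi₀, rfl⟩ : S.Nonempty) (by nlinarith : k * sSup S < sSup S)
    refine ⟨i, hi, ?_⟩
    rw [lt_div_iff₀ (hg i hi)] at hki
    rw [lt_inv_mul_iff₀ hK]
    linarith

lemma IsMDModelV.exists_lt {V : ℝ → ℝ → EReal} (hV : IsMDModelV V) :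
    ∃ m d : ℝ, 0 < d ∧ (m : EReal) < V m d := by
  obtain ⟨-, hVd, hV0, -, m, d₁, d₂, hd₁, hd₂, hne⟩ := hV
  by_contra! h
  have hconst : ∀ d : ℝ, 0 ≤ d → V m d = m := fun d hd => by
    refine le_antisymm ?_ (hV0 m ▸ hVd m self_mem_Ici hd hd)
    rcases hd.eq_or_lt with rfl | hd
    · exact (hV0 m).le
    · exact h m d hd
  exact hne ((hconst d₁ hd₁).trans (hconst d₂ hd₂).symm)

lemma integral_le_essSup (μ : Measure Ω) [IsProbabilityMeasure μ] {X : Ω → ℝ}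
    (hX : Integrable X μ) (hbdd : ∃ c : ℝ, ∀ᵐ ω ∂μ, X ω ≤ c) :
    ∫ ω, X ω ∂μ ≤ essSup X μ := by
  obtain ⟨c, hc⟩ := hbdd
  calc ∫ ω, X ω ∂μ ≤ ∫ _, essSup X μ ∂μ :=
        integral_mono_ae hX (integrable_const _) (ae_le_essSup ⟨c, hc⟩)
    _ = essSup X μ := by simp

lemma integral_lt_essSup (μ : Measure Ω) [IsProbabilityMeasure μ] {X : Ω → ℝ}
    (hX : Integrable X μ) (hbdd : ∃ c : ℝ, ∀ᵐ ω ∂μ, X ω ≤ c) (hXc : ¬ AEConst μ X) :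
    ∫ ω, X ω ∂μ < essSup X μ := by
  refine (integral_le_essSup μ hX hbdd).lt_of_ne fun heq => hXc ⟨essSup X μ, ?_⟩
  obtain ⟨c, hc⟩ := hbdd
  have hnonneg : 0 ≤ᵐ[μ] fun ω => essSup X μ - X ω := by
    filter_upwards [ae_le_essSup ⟨c, hc⟩] with ω h using sub_nonneg.2 h
  have hzero : ∫ ω, (essSup X μ - X ω) ∂μ = 0 := by
    rw [integral_sub (integrable_const _) hX, ← heq]
    simp
  filter_upwards [(integral_eq_zero_iff_of_nonneg_ae hnonneg
    ((integrable_const _).sub hX)).1 hzero] with ω h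
  exact (sub_eq_zero.1 h).symm

lemma Nonatomic.exists_not_aeConst {μ : Measure Ω} [IsProbabilityMeasure μ] (hna : Nonatomic μ)
    (p : ℝ≥0∞) : ∃ X : Ω → ℝ, MemLp X p μ ∧ (∀ ω, X ω ≤ 1) ∧ ¬ AEConst μ X := by
  obtain ⟨B, -, hB, hB0, hB1⟩ := hna univ MeasurableSet.univ (by simp)
  refine ⟨B.indicator 1, memLp_indicator_const p hB 1 (Or.inr (measure_ne_top μ B)),
    fun ω => ?_, ?_⟩
  · by_cases hω : ω ∈ B <;> simp [hω]
  · rintro ⟨c, hc⟩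
    have hBc : μ Bᶜ ≠ 0 := by
      rw [measure_compl hB (measure_ne_top μ B)]
      exact (tsub_pos_of_lt hB1).ne'
    obtain ⟨ω, hω, h1⟩ := Measure.exists_mem_of_measure_ne_zero_of_ae hB0.ne' (ae_restrict_of_ae hc)
    obtain ⟨ω', hω', h0⟩ := Measure.exists_mem_of_measure_ne_zero_of_ae hBc (ae_restrict_of_ae hc)
    simp only [indicator_of_mem hω, indicator_of_notMem hω'] at h1 h0
    simp [← h1] at h0

namespace IsDeviation

variable {μ : Measure Ω} {p : ℝ≥0∞} {D : (Ω → ℝ) → ℝ}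

lemma apply_const [IsFiniteMeasure μ] (hD : IsDeviation μ p D) (c : ℝ) : D (fun _ => c) = 0 := by
  have h0 : D (fun _ : Ω => (0 : ℝ)) = 0 := by
    simpa using hD.2.2.2.1 (fun _ => 0) (memLp_const 0) 0 le_rfl
  simpa [h0] using hD.2.1 (fun _ => 0) (memLp_const 0) c

lemma apply_of_aeConst [IsFiniteMeasure μ] (hD : IsDeviation μ p D) (hDl : LawInvariant μ p D)
    {X : Ω → ℝ} (hX : MemLp X p μ) (h : AEConst μ X) : D X = 0 := by
  obtain ⟨c, hc⟩ := h
  rw [hDl X _ hX (memLp_const c) (Measure.map_congr hc), hD.apply_const]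

lemma apply_mul_add (hD : IsDeviation μ p D) {X : Ω → ℝ} (hX : MemLp X p μ) {l : ℝ}
    (hl : 0 ≤ l) (c : ℝ) : D (fun ω => l * X ω + c) = l * D X := by
  rw [hD.2.1 _ (hX.const_mul l) c, hD.2.2.2.1 X hX l hl]

end IsDeviation

section MeanDeviation

variable {μ : Measure Ω} [IsProbabilityMeasure μ] {p : ℝ≥0∞} {V : ℝ → ℝ → EReal}
  {D : (Ω → ℝ) → ℝ}

lemma le_of_monotoneE_of_ae_le (hV0 : ∀ m : ℝ, V m 0 = m) (hD : IsDeviation μ p D)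
    (hmono : MonotoneE μ p (fun X => V (∫ ω, X ω ∂μ) (D X)))
    {Z : Ω → ℝ} (hZ : MemLp Z p μ) {b : ℝ} (hb : ∀ᵐ ω ∂μ, Z ω ≤ b) :
    V (∫ ω, Z ω ∂μ) (D Z) ≤ b := by
  simpa [hD.apply_const, hV0] using hmono Z (fun _ => b) hZ (memLp_const b) hb

lemma le_add_of_monotoneE (hp : 1 ≤ p) (hV0 : ∀ m : ℝ, V m 0 = m) (hD : IsDeviation μ p D)
    (hmono : MonotoneE μ p (fun X => V (∫ ω, X ω ∂μ) (D X)))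
    {X : Ω → ℝ} (hX : MemLp X p μ) (hDX : 0 < D X) {c : ℝ} (hc : ∀ᵐ ω ∂μ, X ω ≤ c)
    (m : ℝ) {d : ℝ} (hd : 0 ≤ d) :
    V m d ≤ ((m + d / D X * (c - ∫ ω, X ω ∂μ) : ℝ) : EReal) := by
  set l := d / D X
  have hl : 0 ≤ l := div_nonneg hd hDX.le
  have hZ : MemLp (fun ω => l * X ω + (m - l * ∫ ω, X ω ∂μ)) p μ :=
    (hX.const_mul l).add (memLp_const _)
  have hmean : ∫ ω, (l * X ω + (m - l * ∫ ω, X ω ∂μ)) ∂μ = m := by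
    rw [integral_add ((hX.integrable hp).const_mul l) (integrable_const _), integral_const_mul]
    simp
  have hdev : D (fun ω => l * X ω + (m - l * ∫ ω, X ω ∂μ)) = d := by
    rw [hD.apply_mul_add hX hl, div_mul_cancel₀ _ hDX.ne']
  have hbound := le_of_monotoneE_of_ae_le hV0 hD hmono hZ (b := m + l * (c - ∫ ω, X ω ∂μ))
    (by filter_upwards [hc] with ω h; linarith [mul_le_mul_of_nonneg_left h hl])
  rwa [hmean, hdev] at hbound

lemma le_mul_sub_integral_of_lt (hp : 1 ≤ p) (hV0 : ∀ m : ℝ, V m 0 = m)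
    (hD : IsDeviation μ p D) (hmono : MonotoneE μ p (fun X => V (∫ ω, X ω ∂μ) (D X)))
    {m r d : ℝ} (hmr : m < r) (hrd : (r : EReal) < V m d) (hd : 0 ≤ d)
    {X : Ω → ℝ} (hX : MemLp X p μ) (hDX : 0 < D X) {c : ℝ} (hc : ∀ᵐ ω ∂μ, X ω ≤ c) :
    D X ≤ d / (r - m) * (c - ∫ ω, X ω ∂μ) := by
  have hr : r - m < d / D X * (c - ∫ ω, X ω ∂μ) := sub_lt_iff_lt_add'.2 <|
    EReal.coe_lt_coe_iff.1 (hrd.trans_le (le_add_of_monotoneE hp hV0 hD hmono hX hDX hc m hd))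
  have hr' : (r - m) * D X < d * (c - ∫ ω, X ω ∂μ) :=
    calc (r - m) * D X < d / D X * (c - ∫ ω, X ω ∂μ) * D X := mul_lt_mul_of_pos_right hr hDX
      _ = d * (c - ∫ ω, X ω ∂μ) := by field_simp
  rw [div_mul_eq_mul_div, le_div_iff₀ (sub_pos.2 hmr)]
  linarith

end MeanDeviation

/-- Lemma (prop:finite_K): if the mean-deviation model `U = V(E, D)` is monotone, then
`U X < ∞` for every `X ∈ L^p` and there is `λ > 0` such that `λD` is range normalized. -/
theorem meanDeviation_monotone_finite_and_rangeNormalized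
    (μ : Measure Ω) [IsProbabilityMeasure μ] (hna : Nonatomic μ)
    (p : ℝ≥0∞) (hp : 1 ≤ p)
    (V : ℝ → ℝ → EReal) (hV : IsMDModelV V)
    (D : (Ω → ℝ) → ℝ) (hD : IsDeviation μ p D) (hDl : LawInvariant μ p D)
    (hmono : MonotoneE μ p (fun X => V (∫ ω, X ω ∂μ) (D X))) :
    (∀ X, MemLp X p μ → V (∫ ω, X ω ∂μ) (D X) < ⊤) ∧
    ∃ l : ℝ, 0 < l ∧ RangeNormalized μ p (fun X => l * D X) := by
  have hV0 := hV.2.2.1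
  obtain ⟨X₀, hX₀, hX₀le, hX₀c⟩ := hna.exists_not_aeConst p
  have hDX₀ := hD.2.2.1 X₀ hX₀ hX₀c
  refine ⟨fun X hX => (le_add_of_monotoneE hp hV0 hD hmono hX₀ hDX₀ (c := 1)
    (ae_of_all _ hX₀le) _ (hD.1 X hX)).trans_lt (EReal.coe_lt_top _), ?_⟩
  obtain ⟨m, d, hd, hmd⟩ := hV.exists_lt
  obtain ⟨r, hmr, hrd⟩ := EReal.lt_iff_exists_real_btwn.1 hmd
  obtain ⟨l, hl, hle, hsharp⟩ := exists_pos_mul_le_and_forall_lt_one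
    {X | MemLp X p μ ∧ (∃ c : ℝ, ∀ᵐ ω ∂μ, X ω ≤ c) ∧ ¬ AEConst μ X} D
    (fun X => essSup X μ - ∫ ω, X ω ∂μ)
    (fun X ⟨hX, hb, hXc⟩ => sub_pos.2 (integral_lt_essSup μ (hX.integrable hp) hb hXc))
    ⟨d / (r - m), fun X ⟨hX, ⟨c, hc⟩, hXc⟩ => le_mul_sub_integral_of_lt hp hV0 hD hmono
      (EReal.coe_lt_coe_iff.1 hmr) hrd hd.le hX (hD.2.2.1 X hX hXc) (ae_le_essSup ⟨c, hc⟩)⟩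
    ⟨X₀, ⟨hX₀, ⟨1, ae_of_all _ hX₀le⟩, hX₀c⟩, hDX₀⟩
  refine ⟨l, hl, fun X hX hb => ?_, fun k hk => ?_⟩
  · show l * D X ≤ _
    by_cases hXc : AEConst μ X
    · rw [hD.apply_of_aeConst hDl hX hXc, mul_zero]
      exact sub_nonneg.2 (integral_le_essSup μ (hX.integrable hp) hb)
    · exact hle X ⟨hX, hb, hXc⟩
  · obtain ⟨X, ⟨hX, hb, hXc⟩, hkX⟩ := hsharp k hk
    exact ⟨X, hX, hb, hXc, hkX⟩
end
end

section
/- Fix p ∈ [1,∞], D ∈ 𝒟̄^p and g ∈ 𝒢. Then the following are equivalent: (a) MD^D_g is a coherent risk measure; (b) MD^D_g is positively homogeneous (MD^D_g(λX) = λ MD^D_g(X) for all λ > 0 and X ∈ L^p); (c) g is linear, i.e., g(x) = g(1)·x for all x ≥ 0. -/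
open MeasureTheory Filter Set
open scoped ENNReal

noncomputable section

variable {Ω : Type*} [MeasurableSpace Ω]

/-!
Positive homogeneity of `MD = g ∘ D + E`, together with that of `D` and `E`, gives
`g (l * D X) = l * g (D X)` for all `l > 0`; range normalization provides an `X` with `D X > 0`,
so `g` is linear. Conversely, if `g = c • id` then `c = g 1 ∈ [0, 1]` because `g` is increasing and
1-Lipschitz, and [CA], [PH], [SA] are inherited from `D` and `E`. Monotonicity is where range
normalization enters: for `X ≤ Y` a.s.,
`D X - D Y ≤ D (X - Y) ≤ ess-sup (X - Y) - E[X - Y] ≤ E[Y] - E[X]`, and `c ≤ 1`.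
-/

namespace IsDeviation

variable {μ : Measure Ω} {p : ℝ≥0∞} {D : (Ω → ℝ) → ℝ} {X Y : Ω → ℝ}

lemma nonneg (hD : IsDeviation μ p D) (hX : MemLp X p μ) : 0 ≤ D X :=
  hD.1 X hX

lemma add_const (hD : IsDeviation μ p D) (hX : MemLp X p μ) (c : ℝ) :
    D (fun ω => X ω + c) = D X :=
  hD.2.1 X hX c

lemma const_mul (hD : IsDeviation μ p D) (hX : MemLp X p μ) {l : ℝ} (hl : 0 ≤ l) :
    D (fun ω => l * X ω) = l * D X :=
  hD.2.2.2.1 X hX l hl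

lemma add_le (hD : IsDeviation μ p D) (hX : MemLp X p μ) (hY : MemLp Y p μ) :
    D (fun ω => X ω + Y ω) ≤ D X + D Y :=
  hD.2.2.2.2 X Y hX hY

end IsDeviation

lemma essSup_nonpos_of_ae_nonpos {μ : Measure Ω} {U : Ω → ℝ} (hU : ∀ᵐ ω ∂μ, U ω ≤ 0) :
    essSup U μ ≤ 0 :=
  Real.sInf_nonpos' ⟨0, by simpa [Filter.eventually_map] using hU, le_rfl⟩

namespace RangeNormalized

variable {μ : Measure Ω} {p : ℝ≥0∞} {D : (Ω → ℝ) → ℝ}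

lemma exists_pos (hDr : RangeNormalized μ p D) : ∃ X, MemLp X p μ ∧ 0 < D X := by
  obtain ⟨X, hX, -, -, hpos⟩ := hDr.2 0 one_pos
  exact ⟨X, hX, by simpa using hpos⟩

lemma le_neg_integral_of_ae_nonpos (hDr : RangeNormalized μ p D) {U : Ω → ℝ}
    (hU : MemLp U p μ) (hU0 : ∀ᵐ ω ∂μ, U ω ≤ 0) : D U ≤ -∫ ω, U ω ∂μ := by
  have := hDr.1 U hU ⟨0, hU0⟩
  linarith [essSup_nonpos_of_ae_nonpos hU0]

end RangeNormalized

namespace IsRiskWeight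

variable {g : ℝ → ℝ}

lemma map_zero (hg : IsRiskWeight g) : g 0 = 0 :=
  hg.2.2.2

lemma apply_one_nonneg (hg : IsRiskWeight g) : 0 ≤ g 1 :=
  hg.map_zero ▸ hg.2.1 self_mem_Ici (mem_Ici.2 zero_le_one) zero_le_one

lemma apply_one_le_one (hg : IsRiskWeight g) : g 1 ≤ 1 := by
  have := hg.2.2.1 1 0 zero_le_one le_rfl
  rw [hg.map_zero, sub_zero, sub_zero, abs_one] at this
  exact (le_abs_self _).trans this

end IsRiskWeight

section MeanDeviation

variable {μ : Measure Ω} {p : ℝ≥0∞} {D : (Ω → ℝ) → ℝ} {g : ℝ → ℝ}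

lemma cashAdditive_MD [IsProbabilityMeasure μ] (hp : 1 ≤ p) (hD : IsDeviation μ p D) :
    CashAdditive μ p (MD μ D g) := by
  intro X hX c
  simp only [MD, hD.add_const hX c, integral_add (hX.integrable hp) (integrable_const c),
    integral_const, probReal_univ, one_smul]
  ring

lemma MD_eq_of_linear (hD : IsDeviation μ p D) (hlin : ∀ x : ℝ, 0 ≤ x → g x = g 1 * x)
    {X : Ω → ℝ} (hX : MemLp X p μ) : MD μ D g X = g 1 * D X + ∫ ω, X ω ∂μ := by
  rw [MD, hlin _ (hD.nonneg hX)]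

lemma posHom_MD_of_linear (hD : IsDeviation μ p D) (hlin : ∀ x : ℝ, 0 ≤ x → g x = g 1 * x) :
    PosHom μ p (MD μ D g) := by
  intro X hX l hl
  rw [MD_eq_of_linear hD hlin (hX.const_mul l), MD_eq_of_linear hD hlin hX,
    hD.const_mul hX hl.le, integral_const_mul]
  ring

lemma subadditiveRM_MD_of_linear [IsFiniteMeasure μ] (hp : 1 ≤ p) (hD : IsDeviation μ p D)
    (hlin : ∀ x : ℝ, 0 ≤ x → g x = g 1 * x) (hg1 : 0 ≤ g 1) :
    SubadditiveRM μ p (MD μ D g) := by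
  intro X Y hX hY
  rw [MD_eq_of_linear (X := fun ω => X ω + Y ω) hD hlin (hX.add hY), MD_eq_of_linear hD hlin hX,
    MD_eq_of_linear hD hlin hY, integral_add (hX.integrable hp) (hY.integrable hp)]
  linarith [mul_le_mul_of_nonneg_left (hD.add_le hX hY) hg1]

lemma monotoneRM_MD_of_linear [IsFiniteMeasure μ] (hp : 1 ≤ p) (hD : IsDeviation μ p D)
    (hDr : RangeNormalized μ p D) (hlin : ∀ x : ℝ, 0 ≤ x → g x = g 1 * x)
    (hg1 : 0 ≤ g 1) (hg1' : g 1 ≤ 1) : MonotoneRM μ p (MD μ D g) := by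
  intro X Y hX hY hXY
  have hXY' : ∀ᵐ ω ∂μ, X ω - Y ω ≤ 0 := hXY.mono fun ω h => sub_nonpos.2 h
  have hmean : ∫ ω, X ω - Y ω ∂μ = ∫ ω, X ω ∂μ - ∫ ω, Y ω ∂μ :=
    integral_sub (hX.integrable hp) (hY.integrable hp)
  have hdev : D X ≤ D Y + (∫ ω, Y ω ∂μ - ∫ ω, X ω ∂μ) := by
    have htri := hD.add_le (X := fun ω => X ω - Y ω) (hX.sub hY) hY
    simp only [sub_add_cancel] at htri
    linarith [hDr.le_neg_integral_of_ae_nonpos (U := fun ω => X ω - Y ω) (hX.sub hY) hXY']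
  have hmean_le : ∫ ω, X ω ∂μ ≤ ∫ ω, Y ω ∂μ :=
    integral_mono_ae (hX.integrable hp) (hY.integrable hp) hXY
  rw [MD_eq_of_linear hD hlin hX, MD_eq_of_linear hD hlin hY]
  linarith [mul_le_mul_of_nonneg_left hdev hg1,
    mul_nonneg (sub_nonneg.2 hg1') (sub_nonneg.2 hmean_le)]

lemma coherent_MD_of_linear [IsProbabilityMeasure μ] (hp : 1 ≤ p) (hD : IsDeviation μ p D)
    (hDr : RangeNormalized μ p D) (hg : IsRiskWeight g)
    (hlin : ∀ x : ℝ, 0 ≤ x → g x = g 1 * x) : Coherent μ p (MD μ D g) :=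
  ⟨monotoneRM_MD_of_linear hp hD hDr hlin hg.apply_one_nonneg hg.apply_one_le_one,
    cashAdditive_MD hp hD, posHom_MD_of_linear hD hlin,
    subadditiveRM_MD_of_linear hp hD hlin hg.apply_one_nonneg⟩

lemma linear_of_posHom_MD (hD : IsDeviation μ p D) (hDr : RangeNormalized μ p D)
    (hg0 : g 0 = 0) (hPH : PosHom μ p (MD μ D g)) : ∀ x : ℝ, 0 ≤ x → g x = g 1 * x := by
  obtain ⟨X, hX, hd⟩ := hDr.exists_pos
  have hscale : ∀ l : ℝ, 0 < l → g (l * D X) = l * g (D X) := by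
    intro l hl
    have h := hPH X hX l hl
    rw [MD, MD, hD.const_mul hX hl.le, integral_const_mul] at h
    linarith
  have hslope : ∀ x : ℝ, 0 < x → g x = g (D X) / D X * x := by
    intro x hx
    have h := hscale (x / D X) (div_pos hx hd)
    rw [div_mul_cancel₀ _ hd.ne'] at h
    rw [h]
    ring
  intro x hx
  rcases hx.eq_or_lt with rfl | hx
  · rw [hg0, mul_zero]
  · rw [hslope x hx, hslope 1 one_pos, mul_one]

end MeanDeviation

theorem MD_coherent_iff_posHom_iff_linear_general
    (μ : Measure Ω) [IsProbabilityMeasure μ]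
    (p : ℝ≥0∞) (hp : 1 ≤ p)
    (D : (Ω → ℝ) → ℝ) (hD : IsDeviation μ p D)
    (hDr : RangeNormalized μ p D)
    (g : ℝ → ℝ) (hg : IsRiskWeight g) :
    (Coherent μ p (MD μ D g) ↔ ∀ x : ℝ, 0 ≤ x → g x = g 1 * x) ∧
    (PosHom μ p (MD μ D g) ↔ ∀ x : ℝ, 0 ≤ x → g x = g 1 * x) := by
  have hcoh := coherent_MD_of_linear hp hD hDr hg
  have hlin := linear_of_posHom_MD hD hDr hg.map_zero
  exact ⟨⟨fun h => hlin h.2.2.1, hcoh⟩, ⟨hlin, fun h => (hcoh h).2.2.1⟩⟩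

/-- Theorem (prop:2 (i)): `MD^D_g` is coherent iff it is positively homogeneous iff
`g` is linear. -/
theorem MD_coherent_iff_posHom_iff_linear
    (μ : Measure Ω) [IsProbabilityMeasure μ] (hna : Nonatomic μ)
    (p : ℝ≥0∞) (hp : 1 ≤ p)
    (D : (Ω → ℝ) → ℝ) (hD : IsDeviation μ p D) (hDl : LawInvariant μ p D)
    (hDr : RangeNormalized μ p D)
    (g : ℝ → ℝ) (hg : IsRiskWeight g) :
    (Coherent μ p (MD μ D g) ↔ ∀ x : ℝ, 0 ≤ x → g x = g 1 * x) ∧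
    (PosHom μ p (MD μ D g) ↔ ∀ x : ℝ, 0 ≤ x → g x = g 1 * x) :=
  MD_coherent_iff_posHom_iff_linear_general μ p hp D hD hDr g hg
end
end

section
/- Fix p ∈ [1,∞], D ∈ 𝒟̄^p and g ∈ 𝒢. Then MD^D_g is a star-shaped risk measure if and only if g is star-shaped, i.e., g(0) = 0 and g(λx) ≤ λg(x) for all x ≥ 0 and λ ∈ [0,1]. -/
open MeasureTheory Filter Set
open scoped ENNReal

noncomputable section

variable {Ω : Type*} [MeasurableSpace Ω]

/-!
The mean `E` is monotone and cash additive, and range normalization gives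
`D X - D Y ≤ E[Y] - E[X]` whenever `X ≤ Y`; since `g` is increasing and 1-Lipschitz, the drop of
`E` outweighs any rise of `g ∘ D`, so `MD^D_g` is always monetary. By positive homogeneity of `D`
and linearity of `E`, star-shapedness of `MD^D_g` at `X` reads `g (l * D X) ≤ l * g (D X)`, and
every `x ≥ 0` is the deviation of a centered random variable, obtained by rescaling one with positive
deviation.
-/

variable {μ : Measure Ω} {p : ℝ≥0∞} {D : (Ω → ℝ) → ℝ} {g : ℝ → ℝ}

/-- The hypothesis `0 ≤ c` covers the junk value `essSup f μ = 0` when the ess-upper bounds of `f`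
are not bounded below. -/
lemma Real.essSup_le_of_ae_le {f : Ω → ℝ} {c : ℝ} (hc : 0 ≤ c) (hf : ∀ᵐ ω ∂μ, f ω ≤ c) :
    essSup f μ ≤ c := by
  rw [essSup, Filter.limsup_eq]
  by_cases hb : BddBelow {a : ℝ | ∀ᶠ ω in ae μ, f ω ≤ a}
  · exact csInf_le hb hf
  · rwa [Real.sInf_of_not_bddBelow hb]

lemma IsDeviation.apply_zero (hD : IsDeviation μ p D) : D (fun _ => 0) = 0 := by
  simpa using hD.2.2.2.1 (fun _ => 0) MemLp.zero 0 le_rfl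

lemma IsDeviation.le_add_integral_sub [IsFiniteMeasure μ] (hp : 1 ≤ p)
    (hD : IsDeviation μ p D) (hDr : RangeNormalized μ p D) {X Y : Ω → ℝ}
    (hX : MemLp X p μ) (hY : MemLp Y p μ) (hXY : ∀ᵐ ω ∂μ, X ω ≤ Y ω) :
    D X ≤ D Y + ((∫ ω, Y ω ∂μ) - ∫ ω, X ω ∂μ) := by
  have hZ : MemLp (fun ω => X ω - Y ω) p μ := hX.sub hY
  have hZ_nonpos : ∀ᵐ ω ∂μ, X ω - Y ω ≤ 0 := hXY.mono fun _ h => sub_nonpos.2 h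
  have hDZ : D (fun ω => X ω - Y ω) ≤ (∫ ω, Y ω ∂μ) - ∫ ω, X ω ∂μ := by
    have h := hDr.1 _ hZ ⟨0, hZ_nonpos⟩
    rw [integral_sub (hX.integrable hp) (hY.integrable hp)] at h
    linarith [Real.essSup_le_of_ae_le le_rfl hZ_nonpos]
  calc D X = D (fun ω => Y ω + (X ω - Y ω)) := by simp only [add_sub_cancel]
    _ ≤ D Y + D (fun ω => X ω - Y ω) := hD.2.2.2.2 _ _ hY hZ
    _ ≤ D Y + ((∫ ω, Y ω ∂μ) - ∫ ω, X ω ∂μ) := by gcongr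

lemma RangeNormalized.exists_pos_s5 (hDr : RangeNormalized μ p D) :
    ∃ X, MemLp X p μ ∧ 0 < D X := by
  obtain ⟨X, hX, -, -, hpos⟩ := hDr.2 0 one_pos
  exact ⟨X, hX, by simpa using hpos⟩

lemma IsDeviation.exists_integral_eq_zero_and_apply_eq [IsProbabilityMeasure μ] (hp : 1 ≤ p)
    (hD : IsDeviation μ p D) (hDr : RangeNormalized μ p D) {x : ℝ} (hx : 0 ≤ x) :
    ∃ X, MemLp X p μ ∧ ∫ ω, X ω ∂μ = 0 ∧ D X = x := by
  obtain ⟨X, hX, hDX⟩ := hDr.exists_pos_s5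
  set m := ∫ ω, X ω ∂μ
  set a := x / D X
  have hXc : MemLp (fun ω => X ω + -m) p μ := hX.add (memLp_const _)
  refine ⟨fun ω => a * (X ω + -m), hXc.const_mul a, ?_, ?_⟩
  · rw [integral_const_mul, integral_add (hX.integrable hp) (integrable_const _)]
    simp [m]
  · rw [hD.2.2.2.1 _ hXc a (div_nonneg hx hDX.le), hD.2.1 X hX]
    exact div_mul_cancel₀ x hDX.ne'

lemma IsRiskWeight.le_add (hg : IsRiskWeight g) {a b e : ℝ} (ha : 0 ≤ a) (hb : 0 ≤ b)
    (he : 0 ≤ e) (hab : a ≤ b + e) : g a ≤ g b + e := by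
  have hlip := hg.2.2.1 (b + e) b (by linarith) hb
  rw [add_sub_cancel_left, abs_of_nonneg he] at hlip
  calc g a ≤ g (b + e) := hg.2.1 ha (by simp only [Set.mem_Ici]; linarith) hab
    _ ≤ g b + e := by linarith [le_abs_self (g (b + e) - g b)]

lemma monotoneRM_MD [IsFiniteMeasure μ] (hp : 1 ≤ p) (hD : IsDeviation μ p D)
    (hDr : RangeNormalized μ p D) (hg : IsRiskWeight g) : MonotoneRM μ p (MD μ D g) := by
  intro X Y hX hY hXY
  have hE : ∫ ω, X ω ∂μ ≤ ∫ ω, Y ω ∂μ :=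
    integral_mono_ae (hX.integrable hp) (hY.integrable hp) hXY
  have hgD := hg.le_add (hD.1 X hX) (hD.1 Y hY) (sub_nonneg.2 hE)
    (hD.le_add_integral_sub hp hDr hX hY hXY)
  simp only [MD]
  linarith

lemma MD_const_mul (hD : IsDeviation μ p D) {X : Ω → ℝ} (hX : MemLp X p μ) {l : ℝ} (hl : 0 ≤ l) :
    MD μ D g (fun ω => l * X ω) = g (l * D X) + l * ∫ ω, X ω ∂μ := by
  rw [MD, hD.2.2.2.1 X hX l hl, integral_const_mul]

theorem MD_starShaped_iff_starShaped_general
    (μ : Measure Ω) [IsProbabilityMeasure μ]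
    (p : ℝ≥0∞) (hp : 1 ≤ p)
    (D : (Ω → ℝ) → ℝ) (hD : IsDeviation μ p D)
    (hDr : RangeNormalized μ p D)
    (g : ℝ → ℝ) (hg : IsRiskWeight g) :
    StarShapedRM μ p (MD μ D g) ↔
      (g 0 = 0 ∧ ∀ x : ℝ, 0 ≤ x → ∀ l : ℝ, 0 ≤ l → l ≤ 1 → g (l * x) ≤ l * g x) := by
  constructor
  · rintro ⟨-, -, hstar⟩
    refine ⟨hg.2.2.2, fun x hx l hl0 hl1 => ?_⟩
    obtain ⟨X, hX, hEX, hDX⟩ := hD.exists_integral_eq_zero_and_apply_eq hp hDr hx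
    have h := hstar X hX l hl0 hl1
    rwa [MD_const_mul hD hX hl0, MD, hEX, hDX, mul_zero, add_zero, add_zero] at h
  · rintro ⟨-, hstar⟩
    refine ⟨⟨monotoneRM_MD hp hD hDr hg, cashAdditive_MD hp hD⟩, ?_, fun X hX l hl0 hl1 => ?_⟩
    · simp [MD, hD.apply_zero, hg.2.2.2]
    · rw [MD_const_mul hD hX hl0, MD, mul_add]
      gcongr
      exact hstar (D X) (hD.1 X hX) l hl0 hl1

/-- Theorem (prop:2 (iii)): `MD^D_g` is a star-shaped risk measure iff `g` is star-shaped. -/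
theorem MD_starShaped_iff_starShaped
    (μ : Measure Ω) [IsProbabilityMeasure μ] (hna : Nonatomic μ)
    (p : ℝ≥0∞) (hp : 1 ≤ p)
    (D : (Ω → ℝ) → ℝ) (hD : IsDeviation μ p D) (hDl : LawInvariant μ p D)
    (hDr : RangeNormalized μ p D)
    (g : ℝ → ℝ) (hg : IsRiskWeight g) :
    StarShapedRM μ p (MD μ D g) ↔
      (g 0 = 0 ∧ ∀ x : ℝ, 0 ≤ x → ∀ l : ℝ, 0 ≤ l → l ≤ 1 → g (l * x) ≤ l * g x) :=
  MD_starShaped_iff_starShaped_general μ p hp D hD hDr g hg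
end
end

section
/- Fix p ∈ [1,∞], let D ∈ 𝒟̄^p, and let U(X) = V(E[X], D(X)) be a mean-deviation model with U(X) < ∞ for all X ∈ L^p. Suppose that either V is left-continuous in its second argument, or the supremum defining the range normalization of D is attained by some nonconstant X ∈ L^p. Then U satisfies monotonicity [M] (X ≤ Y a.s. implies U(X) ≤ U(Y)) if and only if V(m − a, d + a) ≤ V(m, d) for all m ∈ ℝ and all a, d ≥ 0. -/
open MeasureTheory Filter Set
open scoped ENNReal

noncomputable section

variable {Ω : Type*} [MeasurableSpace Ω]

/-! If `X ≤ Y`, range normalization applied to `X - Y ≤ 0` bounds its deviation by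
`a = E[Y] - E[X]`, so subadditivity gives `D X ≤ D Y + a` and
`U X ≤ V (E[Y] - a) (D Y + a) ≤ U Y`. Conversely, for a centered `T ≤ 1` with `D T = t > 0`
the pair `(d/t + a) T + m - a ≤ (d/t) T + m` has means `m - a, m` and deviations `d + a t, d`,
so monotonicity of `U` gives `V (m - a) (d + a t) ≤ V m d`. Range normalization supplies such `T`
with `t = 1` if the supremum is attained, and with `t` arbitrarily close to `1` in general; then
left-continuity of `V` closes the gap. -/

lemma essSup_le_of_ae_le_of_integrable {μ : Measure Ω} [IsProbabilityMeasure μ] {f : Ω → ℝ}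
    (hf : Integrable f μ) {c : ℝ} (h : ∀ᵐ ω ∂μ, f ω ≤ c) : essSup f μ ≤ c := by
  refine essSup_le_of_ae_le c h (IsCoboundedUnder.of_frequently_ge (a := ∫ ω, f ω ∂μ) ?_)
  intro hlt
  obtain ⟨ω, hω, hle⟩ := exists_notMem_null_integral_le hf (ae_iff.1 hlt)
  exact hω (not_not.2 hle)

lemma integral_const_mul_add_const {μ : Measure Ω} [IsProbabilityMeasure μ] {T : Ω → ℝ}
    (hT : Integrable T μ) (c e : ℝ) :
    ∫ ω, (c * T ω + e) ∂μ = c * ∫ ω, T ω ∂μ + e := by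
  rw [integral_add (hT.const_mul c) (integrable_const e), integral_const_mul, integral_const]
  simp

section MeanDeviation

variable {μ : Measure Ω} {p : ℝ≥0∞} {D : (Ω → ℝ) → ℝ}

lemma IsDeviation.apply_const_mul_add (hD : IsDeviation μ p D) {T : Ω → ℝ} (hT : MemLp T p μ)
    {c : ℝ} (hc : 0 ≤ c) (e : ℝ) : D (fun ω => c * T ω + e) = c * D T :=
  (hD.2.1 _ (hT.const_mul c) e).trans (hD.2.2.2.1 T hT c hc)

variable [IsProbabilityMeasure μ]

lemma IsDeviation.exists_centered_le_one (hp : 1 ≤ p) (hD : IsDeviation μ p D)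
    {X : Ω → ℝ} (hX : MemLp X p μ) (hbdd : ∃ c : ℝ, ∀ᵐ ω ∂μ, X ω ≤ c)
    (hs : 0 < essSup X μ - ∫ ω, X ω ∂μ) :
    ∃ T, MemLp T p μ ∧ ∫ ω, T ω ∂μ = 0 ∧ (∀ᵐ ω ∂μ, T ω ≤ 1) ∧
      D T = D X / (essSup X μ - ∫ ω, X ω ∂μ) := by
  set s := essSup X μ - ∫ ω, X ω ∂μ
  obtain ⟨c, hc⟩ := hbdd
  have hX_le : ∀ᵐ ω ∂μ, X ω ≤ essSup X μ :=
    ae_le_essSup ⟨c, by simpa [eventually_map] using hc⟩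
  refine ⟨fun ω => s⁻¹ * X ω + -(s⁻¹ * ∫ ω, X ω ∂μ), (hX.const_mul _).add (memLp_const _),
    ?_, ?_, ?_⟩
  · rw [integral_const_mul_add_const (hX.integrable hp)]
    ring
  · filter_upwards [hX_le] with ω hω
    rw [← mul_neg, ← mul_add, inv_mul_le_one₀ hs]
    linarith
  · rw [hD.apply_const_mul_add hX (inv_nonneg.2 hs.le), div_eq_inv_mul]

lemma RangeNormalized.exists_centered_le_one_lt (hp : 1 ≤ p) (hD : IsDeviation μ p D)
    (hDr : RangeNormalized μ p D) {k : ℝ} (hk : k < 1) :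
    ∃ T, MemLp T p μ ∧ ∫ ω, T ω ∂μ = 0 ∧ (∀ᵐ ω ∂μ, T ω ≤ 1) ∧ k < D T := by
  obtain ⟨X, hX, hbdd, hnc, hkX⟩ := hDr.2 k hk
  have hs : 0 < essSup X μ - ∫ ω, X ω ∂μ :=
    (hD.2.2.1 X hX hnc).trans_le (hDr.1 X hX hbdd)
  obtain ⟨T, hT, hT0, hT1, hDT⟩ := hD.exists_centered_le_one hp hX hbdd hs
  exact ⟨T, hT, hT0, hT1, hDT ▸ (lt_div_iff₀ hs).2 hkX⟩

lemma IsDeviation.exists_centered_le_one_eq_one (hp : 1 ≤ p) (hD : IsDeviation μ p D)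
    {X : Ω → ℝ} (hX : MemLp X p μ) (hnc : ¬ AEConst μ X) (hbdd : ∃ c : ℝ, ∀ᵐ ω ∂μ, X ω ≤ c)
    (hatt : D X = essSup X μ - ∫ ω, X ω ∂μ) :
    ∃ T, MemLp T p μ ∧ ∫ ω, T ω ∂μ = 0 ∧ (∀ᵐ ω ∂μ, T ω ≤ 1) ∧ D T = 1 := by
  have hs : 0 < essSup X μ - ∫ ω, X ω ∂μ := hatt ▸ hD.2.2.1 X hX hnc
  obtain ⟨T, hT, hT0, hT1, hDT⟩ := hD.exists_centered_le_one hp hX hbdd hs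
  exact ⟨T, hT, hT0, hT1, by rw [hDT, hatt, div_self hs.ne']⟩

lemma RangeNormalized.le_add_integral_sub_of_ae_le (hp : 1 ≤ p) (hD : IsDeviation μ p D)
    (hDr : RangeNormalized μ p D) {X Y : Ω → ℝ} (hX : MemLp X p μ) (hY : MemLp Y p μ)
    (hXY : ∀ᵐ ω ∂μ, X ω ≤ Y ω) :
    D X ≤ D Y + (∫ ω, Y ω ∂μ - ∫ ω, X ω ∂μ) := by
  have hXYi : Integrable (fun ω => X ω - Y ω) μ := (hX.integrable hp).sub (hY.integrable hp)
  have hle : ∀ᵐ ω ∂μ, X ω - Y ω ≤ 0 := by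
    filter_upwards [hXY] with ω hω
    linarith
  have hrange : D (fun ω => X ω - Y ω) ≤ 0 - (∫ ω, X ω ∂μ - ∫ ω, Y ω ∂μ) := by
    rw [← integral_sub (hX.integrable hp) (hY.integrable hp)]
    exact (hDr.1 _ (hX.sub hY) ⟨0, hle⟩).trans
      (sub_le_sub_right (essSup_le_of_ae_le_of_integrable hXYi hle) _)
  calc D X = D (fun ω => Y ω + (X ω - Y ω)) := by simp
    _ ≤ D Y + D (fun ω => X ω - Y ω) := hD.2.2.2.2 Y _ hY (hX.sub hY)
    _ ≤ D Y + (∫ ω, Y ω ∂μ - ∫ ω, X ω ∂μ) := by linarith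

variable {V : ℝ → ℝ → EReal}

lemma monotoneE_of_forall_sub_add_le (hp : 1 ≤ p) (hD : IsDeviation μ p D)
    (hDr : RangeNormalized μ p D) (hVd : ∀ m, MonotoneOn (fun d => V m d) (Ici 0))
    (h : ∀ m a d : ℝ, 0 ≤ a → 0 ≤ d → V (m - a) (d + a) ≤ V m d) :
    MonotoneE μ p (fun X => V (∫ ω, X ω ∂μ) (D X)) := by
  intro X Y hX hY hXY
  have ha : 0 ≤ ∫ ω, Y ω ∂μ - ∫ ω, X ω ∂μ :=
    sub_nonneg.2 (integral_mono_ae (hX.integrable hp) (hY.integrable hp) hXY)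
  have hDY := hD.1 Y hY
  set a := ∫ ω, Y ω ∂μ - ∫ ω, X ω ∂μ
  calc V (∫ ω, X ω ∂μ) (D X)
      ≤ V (∫ ω, X ω ∂μ) (D Y + a) :=
        hVd _ (hD.1 X hX) (by simp only [mem_Ici]; positivity)
          (hDr.le_add_integral_sub_of_ae_le hp hD hX hY hXY)
    _ = V (∫ ω, Y ω ∂μ - a) (D Y + a) := by rw [sub_sub_cancel]
    _ ≤ V (∫ ω, Y ω ∂μ) (D Y) := h _ _ _ ha hDY

lemma MonotoneE.le_of_centered (hp : 1 ≤ p) (hD : IsDeviation μ p D)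
    (hM : MonotoneE μ p (fun X => V (∫ ω, X ω ∂μ) (D X)))
    {T : Ω → ℝ} (hT : MemLp T p μ) (hT0 : ∫ ω, T ω ∂μ = 0) (hT1 : ∀ᵐ ω ∂μ, T ω ≤ 1)
    (hDT : 0 < D T) {m a d : ℝ} (ha : 0 ≤ a) (hd : 0 ≤ d) :
    V (m - a) (d + a * D T) ≤ V m d := by
  set l := d / D T
  have hl : 0 ≤ l := div_nonneg hd hDT.le
  have hle : ∀ᵐ ω ∂μ, (l + a) * T ω + (m - a) ≤ l * T ω + m := by
    filter_upwards [hT1] with ω hω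
    nlinarith
  have hmono := hM (fun ω => (l + a) * T ω + (m - a)) (fun ω => l * T ω + m)
    ((hT.const_mul _).add (memLp_const _)) ((hT.const_mul _).add (memLp_const _)) hle
  simp only [integral_const_mul_add_const (hT.integrable hp), hT0, mul_zero, zero_add,
    hD.apply_const_mul_add hT (add_nonneg hl ha), hD.apply_const_mul_add hT hl] at hmono
  rwa [add_mul, div_mul_cancel₀ d hDT.ne'] at hmono

lemma MonotoneE.le_of_continuousWithinAt (hp : 1 ≤ p) (hD : IsDeviation μ p D)
    (hDr : RangeNormalized μ p D) (hVd : ∀ m, MonotoneOn (fun d => V m d) (Ici 0))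
    (hM : MonotoneE μ p (fun X => V (∫ ω, X ω ∂μ) (D X))) {m a d : ℝ} (ha : 0 ≤ a)
    (hd : 0 ≤ d) (hlc : ContinuousWithinAt (fun t => V (m - a) t) (Ico 0 (d + a)) (d + a)) :
    V (m - a) (d + a) ≤ V m d := by
  rcases ha.eq_or_lt with rfl | ha
  · simp
  have hmem : d + a ∈ closure (Ico 0 (d + a)) := by
    rw [closure_Ico (by positivity)]
    exact right_mem_Icc.2 (by positivity)
  refine hlc.closure_le hmem continuousWithinAt_const fun y hy => ?_
  obtain ⟨T, hT, hT0, hT1, hkT⟩ := hDr.exists_centered_le_one_lt hp hD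
    (k := max ((y - d) / a) 0) (max_lt ((div_lt_one ha).2 (by linarith [hy.2])) one_pos)
  have hDT : 0 < D T := (le_max_right _ _).trans_lt hkT
  have hy_le : y ≤ d + a * D T := by
    have := (le_max_left _ _).trans_lt hkT
    rw [div_lt_iff₀ ha] at this
    linarith
  calc V (m - a) y ≤ V (m - a) (d + a * D T) :=
        hVd _ hy.1 (by simp only [mem_Ici]; positivity) hy_le
    _ ≤ V m d := hM.le_of_centered hp hD hT hT0 hT1 hDT ha.le hd

end MeanDeviation

theorem meanDeviation_monotone_iff_general
    (μ : Measure Ω) [IsProbabilityMeasure μ]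
    (p : ℝ≥0∞) (hp : 1 ≤ p)
    (V : ℝ → ℝ → EReal) (hV : IsMDModelV V)
    (D : (Ω → ℝ) → ℝ) (hD : IsDeviation μ p D)
    (hDr : RangeNormalized μ p D)
    (hcont :
      (∀ m d : ℝ, 0 ≤ d → ContinuousWithinAt (fun t => V m t) (Ico 0 d) d) ∨
      (∃ X, MemLp X p μ ∧ ¬ AEConst μ X ∧ (∃ c : ℝ, ∀ᵐ ω ∂μ, X ω ≤ c) ∧
        D X = essSup X μ - ∫ ω, X ω ∂μ)) :
    MonotoneE μ p (fun X => V (∫ ω, X ω ∂μ) (D X)) ↔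
      ∀ (m a d : ℝ), 0 ≤ a → 0 ≤ d → V (m - a) (d + a) ≤ V m d := by
  refine ⟨fun hM m a d ha hd => ?_, monotoneE_of_forall_sub_add_le hp hD hDr hV.2.1⟩
  rcases hcont with hlc | ⟨X, hX, hnc, hbdd, hatt⟩
  · exact hM.le_of_continuousWithinAt hp hD hDr hV.2.1 ha hd (hlc _ _ (by positivity))
  · obtain ⟨T, hT, hT0, hT1, hDT⟩ := hD.exists_centered_le_one_eq_one hp hX hnc hbdd hatt
    simpa [hDT] using hM.le_of_centered hp hD hT hT0 hT1 (hDT ▸ one_pos) ha hd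

/-- Proposition (prop:chMon): characterization of monotonicity of a mean-deviation
model `U = V(E, D)` with `D ∈ 𝒟̄^p`, under left-continuity of `V` in its second
argument or attainability of the range-normalization supremum. -/
theorem meanDeviation_monotone_iff
    (μ : Measure Ω) [IsProbabilityMeasure μ] (hna : Nonatomic μ)
    (p : ℝ≥0∞) (hp : 1 ≤ p)
    (V : ℝ → ℝ → EReal) (hV : IsMDModelV V)
    (D : (Ω → ℝ) → ℝ) (hD : IsDeviation μ p D) (hDl : LawInvariant μ p D)
    (hDr : RangeNormalized μ p D)
    (hfin : ∀ X, MemLp X p μ → V (∫ ω, X ω ∂μ) (D X) ≠ ⊤)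
    (hcont :
      (∀ m d : ℝ, 0 ≤ d → ContinuousWithinAt (fun t => V m t) (Ico 0 d) d) ∨
      (∃ X, MemLp X p μ ∧ ¬ AEConst μ X ∧ (∃ c : ℝ, ∀ᵐ ω ∂μ, X ω ≤ c) ∧
        D X = essSup X μ - ∫ ω, X ω ∂μ)) :
    MonotoneE μ p (fun X => V (∫ ω, X ω ∂μ) (D X)) ↔
      ∀ (m a d : ℝ), 0 ≤ a → 0 ≤ d → V (m - a) (d + a) ≤ V m d :=
  meanDeviation_monotone_iff_general μ p hp V hV D hD hDr hcont
end
end
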